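/- arXiv:math/0307317 — 5 statements merged into one kernel-verified Lean document; each statement's English description precedes it below -/
import Mathlib

section
/- Let a be an expansive matrix and Ω₀, Ω₁ measurable sets such that for each i, the dilates aʲΩ_i (j ∈ ℤ) are pairwise essentially disjoint. Then Ω₀ is a-dilation equivalent to Ω₁ if and only if ⋃_{j∈ℤ} aʲΩ₀ = ⋃_{j∈ℤ} aʲΩ₁ up to a set of measure zero. -/
open MeasureTheory Matrix Set
open scoped MatrixGroups ComplexConjugate Real

noncomputable section

abbrev Mat (n : ℕ) := Matrix (Fin n) (Fin n) ℝ

/-- A family of sets forms a measurable tiling of `M` (up to null sets). -/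
def TilesSet {ι : Type*} {n : ℕ} (S : ι → Set (Fin n → ℝ)) (M : Set (Fin n → ℝ)) : Prop :=
  (∀ i, MeasurableSet (S i)) ∧
  (Pairwise fun i j => volume (S i ∩ S j) = 0) ∧
  volume (M \ ⋃ i, S i) = 0 ∧ volume ((⋃ i, S i) \ M) = 0

/-- A family of sets forms a measurable tiling of `ℝⁿ`. -/
def Tiles {ι : Type*} {n : ℕ} (S : ι → Set (Fin n → ℝ)) : Prop :=
  TilesSet S Set.univ

/-- A matrix is expansive if all its (complex) eigenvalues have modulus `> 1`. -/
def Expansive {n : ℕ} (A : Mat n) : Prop :=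
  ∀ μ : ℂ, (A.map (Complex.ofReal)).charpoly.IsRoot μ → 1 < ‖μ‖

/-- `U` is `a`-dilation equivalent to `V`: there is a measurable partition `{S k}` of `U`
such that `{aᵏ S k}` is a measurable partition of `V` (all up to null sets). -/
def DilEquiv {n : ℕ} (a : GL (Fin n) ℝ) (U V : Set (Fin n → ℝ)) : Prop :=
  ∃ S : ℤ → Set (Fin n → ℝ), TilesSet S U ∧
    TilesSet (fun k : ℤ => (↑(a ^ k) : Mat n).mulVec '' S k) V

/-- `U` is `L`-translation equivalent to `V`. -/
def TransEquiv {n : ℕ} (L : Set (Fin n → ℝ)) (U V : Set (Fin n → ℝ)) : Prop :=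
  ∃ T : L → Set (Fin n → ℝ), TilesSet T U ∧
    TilesSet (fun k : L => (· + (k : Fin n → ℝ)) '' T k) V

/-- A full rank lattice in `ℝⁿ`. -/
def IsFullRankLattice {n : ℕ} (L : Set (Fin n → ℝ)) : Prop :=
  ∃ b : GL (Fin n) ℝ, L = {x | ∃ k : Fin n → ℤ, x = (↑b : Mat n).mulVec fun i => (k i : ℝ)}

/-- The dual lattice. -/
def DualLattice {n : ℕ} (L : Set (Fin n → ℝ)) : Set (Fin n → ℝ) :=
  {x | ∀ l ∈ L, ∃ m : ℤ, l ⬝ᵥ x = (m : ℝ)}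

namespace Stmt1Aux
variable {n : ℕ}

lemma key_cancel (M : GL (Fin n) ℝ) (x : Fin n → ℝ) :
    (↑M⁻¹ : Mat n).mulVec ((↑M : Mat n).mulVec x) = x := by
  rw [Matrix.mulVec_mulVec, ← Units.val_mul, inv_mul_cancel, Units.val_one, Matrix.one_mulVec]

lemma mulVec_inj (M : GL (Fin n) ℝ) : Function.Injective (↑M : Mat n).mulVec := by
  intro x y h
  have h2 := congrArg (↑M⁻¹ : Mat n).mulVec h
  rwa [key_cancel, key_cancel] at h2

lemma img_comp (M N : GL (Fin n) ℝ) (s : Set (Fin n → ℝ)) :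
    (↑M : Mat n).mulVec '' ((↑N : Mat n).mulVec '' s) = (↑(M * N) : Mat n).mulVec '' s := by
  rw [Set.image_image]
  simp [Matrix.mulVec_mulVec, Units.val_mul]

lemma img_one (s : Set (Fin n → ℝ)) : (↑(1 : GL (Fin n) ℝ) : Mat n).mulVec '' s = s := by
  simp [Units.val_one, Matrix.one_mulVec]

lemma img_eq_preimage (M : GL (Fin n) ℝ) (s : Set (Fin n → ℝ)) :
    (↑M : Mat n).mulVec '' s = (↑M⁻¹ : Mat n).mulVec ⁻¹' s := by
  ext x
  constructor
  · rintro ⟨y, hy, rfl⟩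
    show (↑M⁻¹ : Mat n).mulVec ((↑M : Mat n).mulVec y) ∈ s
    rw [key_cancel]; exact hy
  · intro hx
    refine ⟨(↑M⁻¹ : Mat n).mulVec x, hx, ?_⟩
    have := key_cancel M⁻¹ x
    rwa [inv_inv] at this

lemma mulVec_meas (M : Mat n) : Measurable M.mulVec :=
  (M.mulVecLin.continuous_of_finiteDimensional).measurable

lemma img_meas (M : GL (Fin n) ℝ) {s : Set (Fin n → ℝ)} (hs : MeasurableSet s) :
    MeasurableSet ((↑M : Mat n).mulVec '' s) := by
  rw [img_eq_preimage]
  exact hs.preimage (mulVec_meas _)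

lemma img_null (M : GL (Fin n) ℝ) (s : Set (Fin n → ℝ)) :
    volume ((↑M : Mat n).mulVec '' s) = 0 ↔ volume s = 0 := by
  have h : (↑M : Mat n).mulVec '' s = (Matrix.toLin' (↑M : Mat n)) '' s := by
    rfl
  rw [h, Measure.addHaar_image_linearMap]
  rw [LinearMap.det_toLin']
  have hdet : (↑M : Mat n).det ≠ 0 := by
    have := (Matrix.isUnit_iff_isUnit_det (↑M : Mat n)).mp M.isUnit
    exact this.ne_zero
  constructor
  · intro h0
    rcases mul_eq_zero.mp h0 with h1 | h1
    · exact absurd (abs_eq_zero.mp (le_antisymm (ENNReal.ofReal_eq_zero.mp h1) (abs_nonneg _))) hdet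
    · exact h1
  · intro h0; rw [h0, mul_zero]

lemma img_diff (M : GL (Fin n) ℝ) (s t : Set (Fin n → ℝ)) :
    (↑M : Mat n).mulVec '' (s \ t) = (↑M : Mat n).mulVec '' s \ (↑M : Mat n).mulVec '' t :=
  Set.image_diff (mulVec_inj M) s t

lemma img_inter (M : GL (Fin n) ℝ) (s t : Set (Fin n → ℝ)) :
    (↑M : Mat n).mulVec '' (s ∩ t) = (↑M : Mat n).mulVec '' s ∩ (↑M : Mat n).mulVec '' t :=
  Set.image_inter (mulVec_inj M)

lemma imgZ_comp (a : GL (Fin n) ℝ) (j k : ℤ) (s : Set (Fin n → ℝ)) :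
    (↑(a ^ j) : Mat n).mulVec '' ((↑(a ^ k) : Mat n).mulVec '' s)
      = (↑(a ^ (j + k)) : Mat n).mulVec '' s := by
  rw [img_comp, ← _root_.zpow_add]

lemma imgZ_zero (a : GL (Fin n) ℝ) (s : Set (Fin n → ℝ)) :
    (↑(a ^ (0 : ℤ)) : Mat n).mulVec '' s = s := by
  rw [zpow_zero]; exact img_one s

lemma null_diff_trans {α : Type*} {m : MeasurableSpace α} {μ : Measure α} {s t u : Set α}
    (h1 : μ (s \ t) = 0) (h2 : μ (t \ u) = 0) : μ (s \ u) = 0 := by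
  have hsub : s \ u ⊆ (s \ t) ∪ (t \ u) := by
    intro x hx
    by_cases hxt : x ∈ t
    · exact Or.inr ⟨hxt, hx.2⟩
    · exact Or.inl ⟨hx.1, hxt⟩
  exact measure_mono_null hsub (measure_union_null h1 h2)

end Stmt1Aux

open Stmt1Aux


/-- For an expansive `a` and sets `Ω₀, Ω₁` whose `a`-dilates are pairwise
essentially disjoint, `Ω₀` is `a`-dilation equivalent to `Ω₁` iff
`⋃ⱼ aʲΩ₀ = ⋃ⱼ aʲΩ₁` up to null sets. -/
theorem stmt1 {n : ℕ} (a : GL (Fin n) ℝ) (ha : Expansive (↑a : Mat n))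
    (Ω₀ Ω₁ : Set (Fin n → ℝ)) (hΩ₀ : MeasurableSet Ω₀) (hΩ₁ : MeasurableSet Ω₁)
    (hd₀ : ∀ j k : ℤ, j ≠ k →
      volume ((↑(a ^ j) : Mat n).mulVec '' Ω₀ ∩ (↑(a ^ k) : Mat n).mulVec '' Ω₀) = 0)
    (hd₁ : ∀ j k : ℤ, j ≠ k →
      volume ((↑(a ^ j) : Mat n).mulVec '' Ω₁ ∩ (↑(a ^ k) : Mat n).mulVec '' Ω₁) = 0) :
    DilEquiv a Ω₀ Ω₁ ↔
      (volume ((⋃ j : ℤ, (↑(a ^ j) : Mat n).mulVec '' Ω₀) \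
          (⋃ j : ℤ, (↑(a ^ j) : Mat n).mulVec '' Ω₁)) = 0 ∧
       volume ((⋃ j : ℤ, (↑(a ^ j) : Mat n).mulVec '' Ω₁) \
          (⋃ j : ℤ, (↑(a ^ j) : Mat n).mulVec '' Ω₀)) = 0) := by
  constructor
  · intro h
    obtain ⟨S, ⟨hSm, hSd, hS1, hS2⟩, hTm, hTd, hT1, hT2⟩ := h
    constructor
    · rw [Set.iUnion_diff]
      refine measure_iUnion_null fun j => ?_
      refine null_diff_trans (t := ⋃ k : ℤ, (↑(a ^ j) : Mat n).mulVec '' S k) ?_ ?_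
      · rw [← Set.image_iUnion, ← img_diff]
        exact (img_null _ _).mpr hS1
      · rw [Set.iUnion_diff]
        refine measure_iUnion_null fun k => ?_
        refine measure_mono_null
          (t := (↑(a ^ j) : Mat n).mulVec '' S k \ (↑(a ^ (j - k)) : Mat n).mulVec '' Ω₁) ?_ ?_
        · exact Set.diff_subset_diff_right
            (Set.subset_iUnion (fun m : ℤ => (↑(a ^ m) : Mat n).mulVec '' Ω₁) (j - k))
        · have hjk : (↑(a ^ j) : Mat n).mulVec '' S k
              = (↑(a ^ (j - k)) : Mat n).mulVec '' ((↑(a ^ k) : Mat n).mulVec '' S k) := by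
            rw [imgZ_comp, sub_add_cancel]
          rw [hjk, ← img_diff]
          refine (img_null _ _).mpr ?_
          exact measure_mono_null
            (Set.diff_subset_diff_left
              (Set.subset_iUnion (fun m : ℤ => (↑(a ^ m) : Mat n).mulVec '' S m) k)) hT2
    · rw [Set.iUnion_diff]
      refine measure_iUnion_null fun j => ?_
      refine null_diff_trans
        (t := ⋃ k : ℤ, (↑(a ^ j) : Mat n).mulVec '' ((↑(a ^ k) : Mat n).mulVec '' S k)) ?_ ?_
      · rw [← Set.image_iUnion, ← img_diff]
        exact (img_null _ _).mpr hT1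
      · rw [Set.iUnion_diff]
        refine measure_iUnion_null fun k => ?_
        rw [imgZ_comp]
        refine measure_mono_null
          (t := (↑(a ^ (j + k)) : Mat n).mulVec '' S k \ (↑(a ^ (j + k)) : Mat n).mulVec '' Ω₀)
          ?_ ?_
        · exact Set.diff_subset_diff_right
            (Set.subset_iUnion (fun m : ℤ => (↑(a ^ m) : Mat n).mulVec '' Ω₀) (j + k))
        · rw [← img_diff]
          refine (img_null _ _).mpr ?_
          exact measure_mono_null (Set.diff_subset_diff_left (Set.subset_iUnion S k)) hS2
  · rintro ⟨hA, hB⟩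
    refine ⟨fun k : ℤ => Ω₀ ∩ (↑(a ^ (-k)) : Mat n).mulVec '' Ω₁, ⟨?_, ?_, ?_, ?_⟩, ?_, ?_, ?_, ?_⟩
    · exact fun k => hΩ₀.inter (img_meas _ hΩ₁)
    · intro j k hjk
      refine measure_mono_null
        (t := (↑(a ^ (-j)) : Mat n).mulVec '' Ω₁ ∩ (↑(a ^ (-k)) : Mat n).mulVec '' Ω₁) ?_ ?_
      · exact Set.inter_subset_inter Set.inter_subset_right Set.inter_subset_right
      · exact hd₁ (-j) (-k) (fun h => hjk (neg_injective h))
    · refine measure_mono_null (t := (⋃ j : ℤ, (↑(a ^ j) : Mat n).mulVec '' Ω₀) \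
          (⋃ j : ℤ, (↑(a ^ j) : Mat n).mulVec '' Ω₁)) ?_ hA
      intro x hx
      refine ⟨Set.mem_iUnion.mpr ⟨0, by rw [imgZ_zero]; exact hx.1⟩, ?_⟩
      intro hxU
      obtain ⟨j, hj⟩ := Set.mem_iUnion.mp hxU
      exact hx.2 (Set.mem_iUnion.mpr ⟨-j, ⟨hx.1, by rwa [neg_neg]⟩⟩)
    · rw [Set.diff_eq_empty.mpr (Set.iUnion_subset fun k => Set.inter_subset_left)]
      exact measure_empty
    · exact fun k => img_meas _ (hΩ₀.inter (img_meas _ hΩ₁))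
    · intro j k hjk
      simp only
      refine measure_mono_null
        (t := (↑(a ^ j) : Mat n).mulVec '' Ω₀ ∩ (↑(a ^ k) : Mat n).mulVec '' Ω₀) ?_ (hd₀ j k hjk)
      simp only [img_inter, imgZ_comp, add_neg_cancel, imgZ_zero]
      exact Set.inter_subset_inter Set.inter_subset_left Set.inter_subset_left
    · refine measure_mono_null (t := (⋃ j : ℤ, (↑(a ^ j) : Mat n).mulVec '' Ω₁) \
          (⋃ j : ℤ, (↑(a ^ j) : Mat n).mulVec '' Ω₀)) ?_ hB
      intro x hx
      refine ⟨Set.mem_iUnion.mpr ⟨0, by rw [imgZ_zero]; exact hx.1⟩, ?_⟩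
      intro hxU
      obtain ⟨j, hj⟩ := Set.mem_iUnion.mp hxU
      refine hx.2 (Set.mem_iUnion.mpr ⟨j, ?_⟩)
      rw [img_inter, imgZ_comp, add_neg_cancel, imgZ_zero]
      exact ⟨hj, hx.1⟩
    · have hsub : (⋃ k : ℤ, (↑(a ^ k) : Mat n).mulVec ''
          (Ω₀ ∩ (↑(a ^ (-k)) : Mat n).mulVec '' Ω₁)) ⊆ Ω₁ := by
        refine Set.iUnion_subset fun k => ?_
        rw [img_inter, imgZ_comp, add_neg_cancel, imgZ_zero]
        exact Set.inter_subset_right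
      rw [Set.diff_eq_empty.mpr hsub]
      exact measure_empty
end
end

section
/- Let a ∈ GL(n,ℝ) be expansive and F₀ a set of positive measure with |aʲF₀ ∩ aᵏF₀| = 0 for j ≠ k. Let E = [−1/2,1/2]ⁿ. Then for every ε > 0 there exist k₀ ∈ ℤ and ℓ₀ ∈ ℤⁿ such that |a^{k₀}F₀ ∩ (E + ℓ₀)| > 1 − ε. -/
open MeasureTheory Matrix Set
open scoped MatrixGroups ComplexConjugate Real

noncomputable section

namespace Stmt10Aux

open Filter Topology Polynomial

attribute [local instance] Matrix.linftyOpNormedAddCommGroup Matrix.linftyOpNormedRing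
  Matrix.linftyOpNormedAlgebra

lemma isRoot_charpoly_of_mem_spectrum {n : ℕ} (M : Matrix (Fin n) (Fin n) ℂ) {z : ℂ}
    (hz : z ∈ spectrum ℂ M) : M.charpoly.IsRoot z := by
  rw [spectrum.mem_iff] at hz
  have hs : algebraMap ℂ (Matrix (Fin n) (Fin n) ℂ) z = Matrix.scalar (Fin n) z := rfl
  have hdet : (Matrix.scalar (Fin n) z - M).det = 0 := by
    by_contra h
    exact hz (hs ▸ (Matrix.isUnit_iff_isUnit_det _).2 (isUnit_iff_ne_zero.2 h))
  have : M.charpoly.IsRoot z := by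
    unfold Polynomial.IsRoot
    rw [Matrix.charpoly, eval_det, Matrix.matPolyEquiv_charmatrix]
    simpa using hdet
  exact this

end Stmt10Aux

namespace Stmt10Aux2
open Filter Topology Polynomial
open scoped NNReal ENNReal
attribute [local instance] Matrix.linftyOpNormedAddCommGroup Matrix.linftyOpNormedRing
  Matrix.linftyOpNormedAlgebra

lemma opnorm_small {n : ℕ} (a : GL (Fin n) ℝ) (ha : Expansive (↑a : Mat n)) {c : ℝ} (hc : 0 < c) :
    ∃ k : ℕ, ∀ x : Fin n → ℝ, ‖(↑(a⁻¹ ^ k) : Mat n).mulVec x‖ ≤ c * ‖x‖ := by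
  haveI : CompleteSpace (Matrix (Fin n) (Fin n) ℂ) := FiniteDimensional.complete ℂ _
  set f : Mat n →+* Matrix (Fin n) (Fin n) ℂ := (algebraMap ℝ ℂ).mapMatrix with hf
  set u : (Matrix (Fin n) (Fin n) ℂ)ˣ := Units.map f.toMonoidHom a with hu
  -- every element of the spectrum of u⁻¹ has nnnorm < 1
  have hspec : ∀ z ∈ spectrum ℂ ((↑u⁻¹ : Matrix (Fin n) (Fin n) ℂ)), ‖z‖₊ < 1 := by
    intro z hz
    have hz0 : z ≠ 0 := spectrum.ne_zero_of_mem_of_unit hz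
    have h1 : z⁻¹ ∈ spectrum ℂ ((↑u : Matrix (Fin n) (Fin n) ℂ)) := by
      have := (spectrum.inv₀_mem_inv_iff (r := z⁻¹) (a := u)).1 (by rwa [inv_inv])
      exact this
    have hcp : ((↑a : Mat n).map Complex.ofReal).charpoly.IsRoot z⁻¹ := by
      have : (↑u : Matrix (Fin n) (Fin n) ℂ) = (↑a : Mat n).map Complex.ofReal := rfl
      exact Stmt10Aux.isRoot_charpoly_of_mem_spectrum _ (this ▸ h1)
    have habs := ha _ hcp
    rw [norm_inv] at habs
    have hzabs : 0 < ‖z‖ := by simpa using hz0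
    have : ‖z‖ < 1 := by
      by_contra h
      push_neg at h
      have : (‖z‖)⁻¹ ≤ 1 := by
        rw [inv_le_one_iff₀]; right; exact h
      linarith
    rw [← NNReal.coe_lt_coe, coe_nnnorm]
    simpa using this
  -- spectral radius of u⁻¹ is < 1
  have hfin := Matrix.finite_spectrum (R := ℂ) ((↑u⁻¹ : Matrix (Fin n) (Fin n) ℂ))
  set t0 : ℝ≥0 := hfin.toFinset.sup fun z => ‖z‖₊ with ht0
  have ht01 : t0 < 1 := by
    rw [ht0, Finset.sup_lt_iff (by norm_num : (⊥ : ℝ≥0) < 1)]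
    intro z hzmem
    exact hspec z (hfin.mem_toFinset.1 hzmem)
  have hrad : spectralRadius ℂ ((↑u⁻¹ : Matrix (Fin n) (Fin n) ℂ)) < 1 := by
    have hle : spectralRadius ℂ ((↑u⁻¹ : Matrix (Fin n) (Fin n) ℂ)) ≤ (t0 : ℝ≥0∞) := by
      refine iSup₂_le fun z hzmem => ?_
      exact_mod_cast Finset.le_sup (hfin.mem_toFinset.2 hzmem)
    refine hle.trans_lt ?_
    exact_mod_cast ht01
  obtain ⟨t, hradt, ht1⟩ := ENNReal.lt_iff_exists_nnreal_btwn.1 hrad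
  have ht1' : t < 1 := by exact_mod_cast ht1
  have hgel := spectrum.pow_nnnorm_pow_one_div_tendsto_nhds_spectralRadius
    ((↑u⁻¹ : Matrix (Fin n) (Fin n) ℂ))
  have hev1 : ∀ᶠ k : ℕ in atTop,
      ((‖(↑u⁻¹ : Matrix (Fin n) (Fin n) ℂ) ^ k‖₊ : ℝ≥0∞) ^ (1 / (k:ℝ))) < (t : ℝ≥0∞) :=
    hgel.eventually_lt_const hradt
  have hev2 : ∀ᶠ k : ℕ in atTop, ((t:ℝ)) ^ k < c := by
    have : Tendsto (fun k : ℕ => ((t:ℝ)) ^ k) atTop (𝓝 0) :=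
      tendsto_pow_atTop_nhds_zero_of_lt_one t.coe_nonneg (by exact_mod_cast ht1')
    exact this.eventually_lt_const hc
  obtain ⟨k, ⟨hk1, hk2⟩, hk3⟩ := ((hev1.and hev2).and (eventually_ge_atTop 1)).exists
  -- deduce ‖(u⁻¹)^k‖ ≤ c
  have hkne : (k : ℝ) ≠ 0 := by positivity
  have hbound : ‖(↑u⁻¹ : Matrix (Fin n) (Fin n) ℂ) ^ k‖ ≤ c := by
    set x : ℝ≥0∞ := (‖(↑u⁻¹ : Matrix (Fin n) (Fin n) ℂ) ^ k‖₊ : ℝ≥0∞) with hx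
    have h1 : x ^ ((1:ℝ)/k) ≤ (t : ℝ≥0∞) := hk1.le
    have h2 : x ≤ (t : ℝ≥0∞) ^ (k:ℝ) := by
      calc x = (x ^ ((1:ℝ)/k)) ^ (k:ℝ) := by
              rw [← ENNReal.rpow_mul, one_div, inv_mul_cancel₀ hkne, ENNReal.rpow_one]
        _ ≤ (t : ℝ≥0∞) ^ (k:ℝ) := ENNReal.rpow_le_rpow h1 (Nat.cast_nonneg k)
    have h3 : x ≤ ((t ^ k : ℝ≥0) : ℝ≥0∞) := by
      rwa [ENNReal.coe_pow, ← ENNReal.rpow_natCast (t : ℝ≥0∞) k]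
    have h4 : ‖(↑u⁻¹ : Matrix (Fin n) (Fin n) ℂ) ^ k‖₊ ≤ t ^ k := by rw [hx] at h3; exact_mod_cast h3
    calc ‖(↑u⁻¹ : Matrix (Fin n) (Fin n) ℂ) ^ k‖ ≤ ((t ^ k : ℝ≥0) : ℝ) := by exact_mod_cast h4
      _ = ((t:ℝ)) ^ k := by push_cast; ring
      _ ≤ c := hk2.le
  -- relate to the real matrix
  have hmap : (↑u⁻¹ : Matrix (Fin n) (Fin n) ℂ) ^ k
      = ((↑(a⁻¹ ^ k) : Mat n)).map Complex.ofReal := by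
    have h5 : (↑u⁻¹ : Matrix (Fin n) (Fin n) ℂ) = f (↑a⁻¹ : Mat n) := by
      rw [hu, ← map_inv]; rfl
    rw [h5, ← map_pow]
    have : (↑(a⁻¹ ^ k) : Mat n) = (↑(a⁻¹) : Mat n) ^ k := Units.val_pow_eq_pow_val _ _
    rw [this]; rfl
  have hnormeq : ‖(↑(a⁻¹ ^ k) : Mat n)‖₊
      = ‖(↑u⁻¹ : Matrix (Fin n) (Fin n) ℂ) ^ k‖₊ := by
    rw [hmap, Matrix.linfty_opNNNorm_def, Matrix.linfty_opNNNorm_def]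
    refine congrArg _ (funext fun i => Finset.sum_congr rfl fun j _ => ?_)
    simp [Matrix.map_apply]
  refine ⟨k, fun x => ?_⟩
  calc ‖(↑(a⁻¹ ^ k) : Mat n).mulVec x‖ ≤ ‖(↑(a⁻¹ ^ k) : Mat n)‖ * ‖x‖ :=
        Matrix.linfty_opNorm_mulVec _ _
    _ ≤ c * ‖x‖ := by
        apply mul_le_mul_of_nonneg_right _ (norm_nonneg x)
        have : ‖(↑(a⁻¹ ^ k) : Mat n)‖ = ‖(↑u⁻¹ : Matrix (Fin n) (Fin n) ℂ) ^ k‖ := by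
          have := hnormeq
          simpa [← NNReal.coe_inj, coe_nnnorm] using congrArg NNReal.toReal this
        rw [this]; exact hbound

end Stmt10Aux2

namespace Stmt10Geo
open Filter Topology
open scoped NNReal ENNReal

variable {n : ℕ}

def Qo (ℓ : Fin n → ℤ) : Set (Fin n → ℝ) :=
  {x | ∀ i, x i ∈ Set.Ico ((ℓ i : ℝ) - 1/2) ((ℓ i : ℝ) + 1/2)}

def Qc (ℓ : Fin n → ℤ) : Set (Fin n → ℝ) :=
  {x | ∀ i, x i ∈ Set.Icc ((ℓ i : ℝ) - 1/2) ((ℓ i : ℝ) + 1/2)}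

lemma Qo_subset_Qc (ℓ : Fin n → ℤ) : Qo ℓ ⊆ Qc ℓ :=
  fun x hx i => ⟨(hx i).1, (hx i).2.le⟩

lemma Qo_eq_pi (ℓ : Fin n → ℤ) :
    Qo ℓ = Set.pi Set.univ fun i => Set.Ico ((ℓ i : ℝ) - 1/2) ((ℓ i : ℝ) + 1/2) := by
  ext x
  simp only [Qo, Set.mem_setOf_eq, Set.mem_pi, Set.mem_univ, forall_true_left, true_implies]

lemma Qc_eq_pi (ℓ : Fin n → ℤ) :
    Qc ℓ = Set.pi Set.univ fun i => Set.Icc ((ℓ i : ℝ) - 1/2) ((ℓ i : ℝ) + 1/2) := by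
  ext x
  simp only [Qc, Set.mem_setOf_eq, Set.mem_pi, Set.mem_univ, forall_true_left, true_implies]

lemma Qo_measurable (ℓ : Fin n → ℤ) : MeasurableSet (Qo ℓ) := by
  rw [Qo_eq_pi]; exact MeasurableSet.univ_pi fun i => measurableSet_Ico

lemma Qc_measurable (ℓ : Fin n → ℤ) : MeasurableSet (Qc ℓ) := by
  rw [Qc_eq_pi]; exact MeasurableSet.univ_pi fun i => measurableSet_Icc

lemma volume_Qo (ℓ : Fin n → ℤ) : volume (Qo ℓ) = 1 := by
  rw [Qo_eq_pi, volume_pi_pi]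
  have : ∀ i : Fin n, volume (Set.Ico ((ℓ i : ℝ) - 1/2) ((ℓ i : ℝ) + 1/2)) = 1 := by
    intro i; rw [Real.volume_Ico]; norm_num
  simp only [this, Finset.prod_const, Finset.card_univ, Fintype.card_fin, one_pow]

lemma volume_Qc (ℓ : Fin n → ℤ) : volume (Qc ℓ) = 1 := by
  rw [Qc_eq_pi, volume_pi_pi]
  have : ∀ i : Fin n, volume (Set.Icc ((ℓ i : ℝ) - 1/2) ((ℓ i : ℝ) + 1/2)) = 1 := by
    intro i; rw [Real.volume_Icc]; norm_num
  simp only [this, Finset.prod_const, Finset.card_univ, Fintype.card_fin, one_pow]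

lemma Qo_disjoint {ℓ ℓ' : Fin n → ℤ} (h : ℓ ≠ ℓ') : Disjoint (Qo ℓ) (Qo ℓ') := by
  rw [Set.disjoint_left]
  intro x hx hx'
  apply h
  funext i
  have h1 := hx i
  have h2 := hx' i
  simp only [Set.mem_Ico] at h1 h2
  have e1 : ⌊x i + 1/2⌋ = ℓ i := by
    rw [Int.floor_eq_iff]
    constructor <;> [skip; push_cast] <;> linarith [h1.1, h1.2]
  have e2 : ⌊x i + 1/2⌋ = ℓ' i := by
    rw [Int.floor_eq_iff]
    constructor <;> [skip; push_cast] <;> linarith [h2.1, h2.2]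
  rw [← e1, e2]

lemma mem_Qc_round (y : Fin n → ℝ) : y ∈ Qc fun i => ⌊y i + 1/2⌋ := by
  intro i
  have h1 : (⌊y i + 1/2⌋ : ℝ) ≤ y i + 1/2 := Int.floor_le _
  have h2 : y i + 1/2 < (⌊y i + 1/2⌋ : ℝ) + 1 := Int.lt_floor_add_one _
  constructor <;> simp only [] <;> linarith

lemma Qc_dist (y : Fin n → ℝ) {z : Fin n → ℝ} (hz : z ∈ Qc fun i => ⌊y i + 1/2⌋) :
    ‖z - y‖ ≤ 1 := by
  rw [pi_norm_le_iff_of_nonneg (by norm_num : (0:ℝ) ≤ 1)]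
  intro i
  have h1 : (⌊y i + 1/2⌋ : ℝ) ≤ y i + 1/2 := Int.floor_le _
  have h2 : y i + 1/2 < (⌊y i + 1/2⌋ : ℝ) + 1 := Int.lt_floor_add_one _
  have h3 := (hz i).1
  have h4 := (hz i).2
  simp only [Pi.sub_apply, Real.norm_eq_abs, abs_le]
  constructor <;> linarith

lemma cube_trans (ℓ : Fin n → ℤ) :
    ((· + fun i => (ℓ i : ℝ)) '' {x : Fin n → ℝ | ∀ i, x i ∈ Set.Icc (-(1/2) : ℝ) (1/2)})
      = Qc ℓ := by
  ext y
  simp only [Set.mem_image, Set.mem_setOf_eq]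
  constructor
  · rintro ⟨x, hx, rfl⟩ i
    have := hx i
    simp only [Set.mem_Icc, Pi.add_apply] at this ⊢
    constructor <;> linarith [this.1, this.2]
  · intro h
    refine ⟨fun i => y i - ℓ i, fun i => ?_, ?_⟩
    · have := h i
      simp only [Set.mem_Icc] at this ⊢
      constructor <;> linarith [this.1, this.2]
    · funext i
      simp

lemma volume_closedBall_pi (x : Fin n → ℝ) {s : ℝ} (hs : 0 ≤ s) :
    volume (Metric.closedBall x s) = ENNReal.ofReal ((2*s)^n) := by
  rw [closedBall_pi x hs, volume_pi_pi]
  have : ∀ i, volume (Metric.closedBall (x i) s) = ENNReal.ofReal (2*s) := by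
    intro i
    rw [Real.closedBall_eq_Icc, Real.volume_Icc]
    congr 1
    ring
  simp only [this, Finset.prod_const, Finset.card_univ, Fintype.card_fin]
  rw [← ENNReal.ofReal_pow (by linarith)]

end Stmt10Geo

namespace Stmt10Main
open Filter Topology Stmt10Geo
open scoped NNReal ENNReal

lemma key {n : ℕ} (a : GL (Fin n) ℝ) (ha : Expansive (↑a : Mat n))
    (F₀ : Set (Fin n → ℝ)) (hF₀ : MeasurableSet F₀) (hpos : 0 < volume F₀)
    (ε : ℝ) (hε : 0 < ε) (hε1 : ε ≤ 1) :
    ∃ (k₀ : ℤ) (ℓ₀ : Fin n → ℤ),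
      ENNReal.ofReal (1 - ε) <
        volume ((↑(a ^ k₀) : Mat n).mulVec '' F₀ ∩
          ((· + fun i => (ℓ₀ i : ℝ)) '' {x : Fin n → ℝ | ∀ i, x i ∈ Set.Icc (-(1/2) : ℝ) (1/2)})) := by
  by_contra hcon
  push_neg at hcon
  -- the parameter δ
  set δ : ℝ := ε / 2^(n+1) with hδdef
  have hδ0 : 0 < δ := by positivity
  have hδ1 : δ ≤ 1/2 := by
    rw [hδdef, div_le_iff₀ (by positivity)]
    have h2 : (2:ℝ) ≤ 2^(n+1) := by
      calc (2:ℝ) = 2^1 := (pow_one 2).symm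
        _ ≤ 2^(n+1) := pow_le_pow_right₀ (by norm_num) (by omega)
    nlinarith
  -- a Lebesgue density point of F₀
  have hae := Besicovitch.ae_tendsto_measure_inter_div_of_measurableSet
    (volume : Measure (Fin n → ℝ)) hF₀
  rw [MeasureTheory.ae_iff] at hae
  obtain ⟨x₀, hx₀F, hx₀⟩ : ∃ x₀ ∈ F₀, Filter.Tendsto
      (fun r => volume (F₀ ∩ Metric.closedBall x₀ r) / volume (Metric.closedBall x₀ r))
      (nhdsWithin 0 (Set.Ioi 0)) (nhds (Set.indicator F₀ 1 x₀)) := by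
    by_contra h
    push_neg at h
    have hsub : F₀ ⊆ {x | ¬ Filter.Tendsto
        (fun r => volume (F₀ ∩ Metric.closedBall x r) / volume (Metric.closedBall x r))
        (nhdsWithin 0 (Set.Ioi 0)) (nhds (Set.indicator F₀ 1 x))} := fun x hx hPx => h x hx hPx
    exact hpos.ne' (le_antisymm ((measure_mono hsub).trans hae.le) zero_le)
  rw [Set.indicator_of_mem hx₀F] at hx₀
  have hx₀' : Filter.Tendsto
      (fun r => volume (F₀ ∩ Metric.closedBall x₀ r) / volume (Metric.closedBall x₀ r))
      (nhdsWithin 0 (Set.Ioi 0)) (nhds 1) := hx₀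
  -- choose the radius r
  have hlt1 : ENNReal.ofReal (1-δ) < 1 := ENNReal.ofReal_lt_one.2 (by linarith)
  obtain ⟨r, hrineq, hr0⟩ :=
    ((hx₀'.eventually_const_lt hlt1).and self_mem_nhdsWithin).exists
  -- choose the exponent k
  obtain ⟨k, hk⟩ := Stmt10Aux2.opnorm_small a ha (half_pos hr0)
  -- notation
  set M : Mat n := (↑(a^k) : Mat n) with hM
  set N : Mat n := (↑(a⁻¹^k) : Mat n) with hN
  have hMN : M * N = 1 := by
    rw [hM, hN, ← Units.val_mul, inv_pow]
    norm_num
  have hNM : N * M = 1 := by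
    rw [hM, hN, ← Units.val_mul, inv_pow]
    norm_num
  set T : (Fin n → ℝ) → (Fin n → ℝ) := M.mulVec with hT
  set S : (Fin n → ℝ) → (Fin n → ℝ) := N.mulVec with hS
  have hST : ∀ x, S (T x) = x := by
    intro x; rw [hS, hT, Matrix.mulVec_mulVec, hNM, Matrix.one_mulVec]
  have hTS : ∀ x, T (S x) = x := by
    intro x; rw [hS, hT, Matrix.mulVec_mulVec, hMN, Matrix.one_mulVec]
  have himage : ∀ s : Set (Fin n → ℝ), T '' s = S ⁻¹' s := by
    intro s; ext y
    constructor
    · rintro ⟨x, hx, rfl⟩; simpa [Set.mem_preimage, hST x] using hx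
    · intro hy; exact ⟨S y, hy, hTS y⟩
  have hScont : Continuous S := by
    have : S = ⇑(Matrix.mulVecLin N) := by funext v; rfl
    rw [this]
    exact (Matrix.mulVecLin N).continuous_of_finiteDimensional
  -- determinant
  set D : ℝ := |M.det| with hD
  have hD0 : 0 < D := by
    rw [hD, abs_pos]
    exact ((Matrix.isUnit_iff_isUnit_det M).1 ⟨a^k, rfl⟩).ne_zero
  have himg : ∀ s : Set (Fin n → ℝ), volume (T '' s) = ENNReal.ofReal D * volume s := by
    intro s
    have h := MeasureTheory.Measure.addHaar_image_linearMap
      (μ := (volume : Measure (Fin n → ℝ))) (Matrix.toLin' M) s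
    have h1 : ⇑(Matrix.toLin' M) = T := by funext v; rfl
    have h2 : LinearMap.det (Matrix.toLin' M) = M.det := LinearMap.det_toLin' M
    rw [h1, h2] at h
    exact h
  -- sets
  set G : Set (Fin n → ℝ) := T '' F₀ with hG
  have hGm : MeasurableSet G := by
    rw [hG, himage]
    exact hScont.measurable hF₀
  set B1 : Set (Fin n → ℝ) := Metric.closedBall x₀ r with hB1
  set K : Set (Fin n → ℝ) := T '' B1 with hK
  set K' : Set (Fin n → ℝ) := T '' (Metric.closedBall x₀ (r/2)) with hK'
  -- the contradiction hypothesis, in cube form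
  have hcon' : ∀ ℓ : Fin n → ℤ, volume (G ∩ Qc ℓ) ≤ ENNReal.ofReal (1-ε) := by
    intro ℓ
    have h := hcon (k : ℤ) ℓ
    rw [zpow_natCast, cube_trans] at h
    exact h
  -- admissible cubes
  set L : Set (Fin n → ℤ) := {ℓ | Qc ℓ ⊆ K} with hL
  -- K' is covered by admissible closed cubes
  have hK'cover : K' ⊆ ⋃ ℓ : ↥L, Qc (↑ℓ : Fin n → ℤ) := by
    intro y hy
    set ℓ : Fin n → ℤ := fun i => ⌊y i + 1/2⌋ with hℓ
    have hQK : Qc ℓ ⊆ K := by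
      intro z hz
      have hdist := Qc_dist y hz
      obtain ⟨u, hu, huy⟩ := hy
      refine ⟨u + N.mulVec (z - y), ?_, ?_⟩
      · rw [Metric.mem_closedBall, dist_eq_norm] at hu ⊢
        have h1 : ‖N.mulVec (z-y)‖ ≤ (r/2) * ‖z - y‖ := hk _
        have h2 : u + N.mulVec (z-y) - x₀ = (u - x₀) + N.mulVec (z-y) := by abel
        rw [h2]
        calc ‖(u - x₀) + N.mulVec (z-y)‖ ≤ ‖u - x₀‖ + ‖N.mulVec (z-y)‖ := norm_add_le _ _
          _ ≤ r/2 + r/2 := by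
              refine add_le_add hu (h1.trans ?_)
              nlinarith [hr0]
          _ = r := by ring
      · rw [hT, Matrix.mulVec_add, Matrix.mulVec_mulVec, hMN, Matrix.one_mulVec, ← hT, huy]
        abel
    exact Set.mem_iUnion.2 ⟨⟨ℓ, hQK⟩, mem_Qc_round y⟩
  -- per-cube lower bound on the missing mass
  have S2 : ∀ ℓ : ↥L, ENNReal.ofReal ε ≤ volume (Qo (↑ℓ : Fin n → ℤ) \ G) := by
    intro ℓ
    have h1 : volume (Qo ↑ℓ ∩ G) + volume (Qo ↑ℓ \ G) = volume (Qo (↑ℓ : Fin n → ℤ)) :=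
      measure_inter_add_diff _ hGm
    rw [volume_Qo] at h1
    have h2 : volume (Qo ↑ℓ ∩ G) ≤ ENNReal.ofReal (1-ε) := by
      refine le_trans (measure_mono ?_) (hcon' ↑ℓ)
      exact fun x hx => ⟨hx.2, Qo_subset_Qc _ hx.1⟩
    by_contra hlt
    push_neg at hlt
    have : (1:ℝ≥0∞) < 1 := by
      calc (1:ℝ≥0∞) = volume (Qo ↑ℓ ∩ G) + volume (Qo ↑ℓ \ G) := h1.symm
        _ < ENNReal.ofReal (1-ε) + ENNReal.ofReal ε :=
            ENNReal.add_lt_add_of_le_of_lt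
              (ne_top_of_le_ne_top ENNReal.ofReal_ne_top h2) h2 hlt
        _ = ENNReal.ofReal 1 := by rw [← ENNReal.ofReal_add (by linarith) hε.le]; norm_num
        _ = 1 := ENNReal.ofReal_one
    exact lt_irrefl _ this
  -- disjointness
  have hdisjsub : Pairwise (Function.onFun Disjoint fun ℓ : ↥L => Qo (↑ℓ : Fin n → ℤ) \ G) := by
    intro i j hij
    exact Disjoint.mono Set.diff_subset Set.diff_subset
      (Qo_disjoint fun h => hij (Subtype.ext h))
  have hUnionEq : volume (⋃ ℓ : ↥L, (Qo (↑ℓ : Fin n → ℤ) \ G))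
      = ∑' ℓ : ↥L, volume (Qo (↑ℓ : Fin n → ℤ) \ G) :=
    measure_iUnion hdisjsub fun ℓ => (Qo_measurable _).diff hGm
  -- K minus G is small
  have hKdiff : K \ G ⊆ T '' (B1 \ F₀) := by
    rintro x ⟨⟨u, hu, rfl⟩, hxG⟩
    exact ⟨u, ⟨hu, fun hF => hxG ⟨u, hF, rfl⟩⟩, rfl⟩
  have hB1vol : volume B1 = ENNReal.ofReal ((2*r)^n) := volume_closedBall_pi x₀ hr0.le
  have hB1ne0 : volume B1 ≠ 0 := by
    rw [hB1vol]
    exact (ENNReal.ofReal_pos.2 (by positivity)).ne'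
  have hB1top : volume B1 ≠ ⊤ := by rw [hB1vol]; exact ENNReal.ofReal_ne_top
  have hdens : ENNReal.ofReal (1-δ) * volume B1 ≤ volume (F₀ ∩ B1) := by
    have h := hrineq
    rw [ENNReal.lt_div_iff_mul_lt (Or.inl hB1ne0) (Or.inl hB1top)] at h
    exact h.le
  have hdiff : volume (B1 \ F₀) ≤ ENNReal.ofReal δ * volume B1 := by
    have hsplit : volume (B1 ∩ F₀) + volume (B1 \ F₀) = volume B1 :=
      measure_inter_add_diff B1 hF₀
    have hIc : ENNReal.ofReal (1-δ) * volume B1 ≤ volume (B1 ∩ F₀) := by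
      rwa [Set.inter_comm] at hdens
    by_contra hlt
    push_neg at hlt
    have : volume B1 < volume B1 := by
      calc volume B1 = ENNReal.ofReal (1-δ) * volume B1 + ENNReal.ofReal δ * volume B1 := by
            rw [← add_mul, ← ENNReal.ofReal_add (by linarith) hδ0.le]
            norm_num
        _ < volume (B1 ∩ F₀) + volume (B1 \ F₀) :=
            ENNReal.add_lt_add_of_le_of_lt
              (ne_top_of_le_ne_top hB1top (le_trans hIc (measure_mono Set.inter_subset_left)))
              hIc hlt
        _ = volume B1 := hsplit
    exact lt_irrefl _ this
  -- the main chain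
  have main : ENNReal.ofReal ε * volume K' ≤ ENNReal.ofReal D * (ENNReal.ofReal δ * volume B1) := by
    calc ENNReal.ofReal ε * volume K'
        ≤ ENNReal.ofReal ε * ∑' ℓ : ↥L, volume (Qc (↑ℓ : Fin n → ℤ)) :=
          mul_le_mul_right ((measure_mono hK'cover).trans (measure_iUnion_le _)) _
      _ = ∑' ℓ : ↥L, ENNReal.ofReal ε := by
          simp only [volume_Qc]
          rw [← ENNReal.tsum_mul_left]
          simp
      _ ≤ ∑' ℓ : ↥L, volume (Qo (↑ℓ : Fin n → ℤ) \ G) := ENNReal.tsum_le_tsum S2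
      _ = volume (⋃ ℓ : ↥L, (Qo (↑ℓ : Fin n → ℤ) \ G)) := hUnionEq.symm
      _ ≤ volume (K \ G) := by
          refine measure_mono (Set.iUnion_subset fun ℓ => ?_)
          exact Set.diff_subset_diff_left ((Qo_subset_Qc _).trans ℓ.2)
      _ ≤ volume (T '' (B1 \ F₀)) := measure_mono hKdiff
      _ = ENNReal.ofReal D * volume (B1 \ F₀) := himg _
      _ ≤ ENNReal.ofReal D * (ENNReal.ofReal δ * volume B1) := mul_le_mul_right hdiff _
  have hK'vol : volume K' = ENNReal.ofReal D * ENNReal.ofReal (r^n) := by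
    rw [hK', himg, volume_closedBall_pi x₀ (by linarith)]
    congr 2
    ring
  rw [hK'vol, hB1vol] at main
  rw [← mul_assoc, ← ENNReal.ofReal_mul hε.le, ← ENNReal.ofReal_mul (by positivity),
    ← ENNReal.ofReal_mul hδ0.le, ← ENNReal.ofReal_mul hD0.le] at main
  have hreal : ε * D * r^n ≤ D * (δ * (2*r)^n) :=
    (ENNReal.ofReal_le_ofReal_iff (by positivity)).1 main
  have hrn : (0:ℝ) < r^n := by positivity
  have h2n : ((2:ℝ)*r)^n = 2^n * r^n := mul_pow 2 r n
  have hps : (2:ℝ)^(n+1) = 2*2^n := by rw [pow_succ]; ring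
  have hδε : δ * 2^(n+1) = ε := by rw [hδdef]; field_simp
  have hhalf : δ * 2^n = ε/2 := by
    have h := hδε
    rw [hps] at h
    linear_combination h/2
  rw [h2n] at hreal
  have heq : D * (δ * (2^n * r^n)) = (ε/2) * (D * r^n) := by
    rw [← hhalf]; ring
  rw [heq] at hreal
  nlinarith [hreal, mul_lt_mul_of_pos_right (show ε/2 < ε by linarith) (mul_pos hD0 hrn)]

end Stmt10Main


/-- For `a` expansive and `F₀` of positive measure with essentially disjoint
`a`-dilates, and `E = [-1/2,1/2]ⁿ`, for every `ε > 0` there are `k₀ ∈ ℤ`, `ℓ₀ ∈ ℤⁿ` with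
`|a^{k₀}F₀ ∩ (E + ℓ₀)| > 1 - ε`. -/
theorem stmt10 {n : ℕ} (a : GL (Fin n) ℝ) (ha : Expansive (↑a : Mat n))
    (F₀ : Set (Fin n → ℝ)) (hF₀ : MeasurableSet F₀) (hpos : 0 < volume F₀)
    (hdisj : ∀ j k : ℤ, j ≠ k →
      volume ((↑(a ^ j) : Mat n).mulVec '' F₀ ∩ (↑(a ^ k) : Mat n).mulVec '' F₀) = 0)
    (ε : ℝ) (hε : 0 < ε) :
    ∃ (k₀ : ℤ) (ℓ₀ : Fin n → ℤ),
      ENNReal.ofReal (1 - ε) <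
        volume ((↑(a ^ k₀) : Mat n).mulVec '' F₀ ∩
          ((· + fun i => (ℓ₀ i : ℝ)) '' {x : Fin n → ℝ | ∀ i, x i ∈ Set.Icc (-(1/2) : ℝ) (1/2)})) := by
  rcases le_or_gt ε 1 with h1 | h1
  · exact Stmt10Main.key a ha F₀ hF₀ hpos ε hε h1
  · obtain ⟨k₀, ℓ₀, hk⟩ := Stmt10Main.key a ha F₀ hF₀ hpos 1 one_pos le_rfl
    refine ⟨k₀, ℓ₀, ?_⟩
    have h0 : ENNReal.ofReal (1 - ε) = 0 := ENNReal.ofReal_of_nonpos (by linarith)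
    rw [h0]
    simpa using hk
end
end

section
/- Let H ⊆ GL(n,ℝ) be a closed subgroup with left Haar measure μ_H, acting on ℝⁿ by a·ω = (a⁻¹)ᵀω. Suppose M ⊆ ℝⁿ is, up to a null set, a finite union of open H-orbits U₁,…,U_k, and the stabilizer H^ω = {h ∈ H : hᵀω = ω} is compact for each ω ∈ U_j. Then there exists ψ ∈ L²(ℝⁿ) with ψ̂ continuous of compact support, such that ∫_H |ψ̂(aᵀω)|² dμ_H(a) = 1 for almost every ω ∈ M; i.e., the pair (H,M) is admissible. -/
open MeasureTheory Matrix Set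
open scoped MatrixGroups ComplexConjugate Real

noncomputable section

open MulAction in
open scoped Pointwise in
/-- Properness of the orbit map for a transitive action with compact stabilizer. -/
theorem aux_proper' {G X : Type*} [Group G] [TopologicalSpace G] [IsTopologicalGroup G]
    [LocallyCompactSpace G] [SigmaCompactSpace G]
    [TopologicalSpace X] [T2Space X] [BaireSpace X]
    [MulAction G X] [ContinuousSMul G X] [MulAction.IsPretransitive G X]
    (x : X) (hstab : IsCompact {g : G | g • x = x})
    {K : Set X} (hK : IsCompact K) : IsCompact {g : G | g • x ∈ K} := by
  obtain ⟨W, hWc, hW1⟩ := exists_compact_mem_nhds (1 : G)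
  have hopen : IsOpenMap (fun g : G => g • x) := isOpenMap_smul_of_sigmaCompact x
  have hcont : Continuous (fun g : G => g • x) := continuous_id.smul continuous_const
  have hex : ∀ y : X, ∃ g : G, g • x = y := fun y => exists_smul_eq G x y
  choose c hc using hex
  obtain ⟨t, -, hKt⟩ := hK.elim_nhds_subcover
      (fun y => (fun g : G => g • x) '' ((c y * ·) '' interior W)) (fun y hy => by
    refine (hopen _ ((isOpenMap_mul_left (c y)) _ isOpen_interior)).mem_nhds
      ⟨c y * 1, ⟨1, mem_interior_iff_mem_nhds.2 hW1, rfl⟩, by rw [mul_one]; exact hc y⟩)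
  have hclosed : IsClosed {g : G | g • x ∈ K} := hK.isClosed.preimage hcont
  have hcov : {g : G | g • x ∈ K} ⊆ ⋃ y ∈ t, (c y * ·) '' (W * {g : G | g • x = x}) := by
    intro a ha
    obtain ⟨y, hyt, w', ⟨w, hw, rfl⟩, hwx⟩ := Set.mem_iUnion₂.1 (hKt ha)
    have hsx : ((c y * w)⁻¹ * a) • x = x := by
      rw [mul_smul, ← hwx]; exact inv_smul_smul _ _
    exact Set.mem_biUnion hyt
      ⟨w * ((c y * w)⁻¹ * a), Set.mul_mem_mul (interior_subset hw) hsx, by group⟩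
  exact IsCompact.of_isClosed_subset
    (t.isCompact_biUnion fun y _ => (hWc.mul hstab).image (continuous_mul_left (c y)))
    hclosed hcov

/-- If `H` is a closed subgroup of `GL(n,ℝ)` (realized via a closed embedding
`φ`), `M` is up to a null set a finite union of open `H`-orbits `U₁,…,U_k` for the action
`a·ω = (a⁻¹)ᵀω`, with compact stabilizers on each orbit, then `(H,M)` is admissible: there is
`ψ ∈ L²` whose Fourier transform `ψ̂` is continuous of compact support with
`∫_H |ψ̂(aᵀω)|² dμ_H(a) = 1` for a.e. `ω ∈ M`. -/
theorem stmt11 {n k : ℕ} (H : Type) [Group H] [TopologicalSpace H] [IsTopologicalGroup H]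
    [MeasurableSpace H] [BorelSpace H] [LocallyCompactSpace H]
    (μ : Measure H) [μ.IsHaarMeasure]
    (φ : H →* GL (Fin n) ℝ) (hφinj : Function.Injective φ)
    (hφemb : Topology.IsClosedEmbedding fun h : H => (φ h : GL (Fin n) ℝ))
    (U : Fin k → Set (Fin n → ℝ)) (hUopen : ∀ j, IsOpen (U j))
    (horbit : ∀ j, ∃ ωj : Fin n → ℝ,
      U j = {x | ∃ h : H, x = ((↑(φ h)⁻¹ : Mat n)).transpose.mulVec ωj})
    (hstab : ∀ j, ∀ ω ∈ U j, IsCompact {h : H | ((φ h : Mat n)).transpose.mulVec ω = ω})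
    (M : Set (Fin n → ℝ)) (hM : MeasurableSet M)
    (hM1 : volume (M \ ⋃ j, U j) = 0) (hM2 : volume ((⋃ j, U j) \ M) = 0) :
    ∃ ψhat : (Fin n → ℝ) → ℂ, Continuous ψhat ∧ HasCompactSupport ψhat ∧
      ∀ᵐ ω ∂(volume : Measure (Fin n → ℝ)), ω ∈ M →
        ∫ a, ‖ψhat ((φ a : Mat n).transpose.mulVec ω)‖ ^ 2 ∂μ = 1 := by
  classical
  -- H is second countable, hence sigma-compact
  letI : SecondCountableTopology (Mat n) :=
    inferInstanceAs (SecondCountableTopology (Fin n → Fin n → ℝ))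
  letI : SecondCountableTopology ((Mat n)ᵐᵒᵖ) :=
    MulOpposite.opHomeomorph.symm.isEmbedding.secondCountableTopology
  letI : SecondCountableTopology (GL (Fin n) ℝ) :=
    Units.isEmbedding_embedProduct.secondCountableTopology
  haveI : SecondCountableTopology H := hφemb.isEmbedding.secondCountableTopology
  -- the transposed matrix map
  set T : H → Mat n := fun h => ((φ h : GL (Fin n) ℝ) : Mat n).transpose with hTdef
  have hTapp : ∀ a : H, ((φ a : GL (Fin n) ℝ) : Mat n).transpose = T a := fun a => rfl
  have hT1 : T 1 = 1 := by simp [hTdef]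
  have hT : ∀ (a b : H) (v : Fin n → ℝ),
      (T a).mulVec ((T b).mulVec v) = (T (b * a)).mulVec v := by
    intro a b v
    have e : T (b * a) = T a * T b := by simp [hTdef, Matrix.transpose_mul]
    rw [e, ← Matrix.mulVec_mulVec]
  have hTinv : ∀ (a : H) (v : Fin n → ℝ), (T a⁻¹).mulVec ((T a).mulVec v) = v := by
    intro a v
    rw [hT, mul_inv_cancel, hT1, Matrix.one_mulVec]
  have hTcont : Continuous fun h : H => T h :=
    (Units.continuous_val.comp hφemb.continuous).matrix_transpose
  have horbc : ∀ v : Fin n → ℝ, Continuous fun a : H => (T a).mulVec v :=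
    fun v => Continuous.matrix_mulVec hTcont continuous_const
  -- base points of the orbits
  choose ω hUdef using horbit
  have hUP : ∀ j x, x ∈ U j ↔ ∃ h : H, x = (T h).mulVec (ω j) := by
    intro j x
    rw [hUdef j]
    constructor
    · rintro ⟨h, rfl⟩
      exact ⟨h⁻¹, by rw [hTdef]; simp [← map_inv]⟩
    · rintro ⟨h, rfl⟩
      exact ⟨h⁻¹, by rw [hTdef]; simp [← map_inv, inv_inv]⟩
  have hωU : ∀ j, ω j ∈ U j := fun j => (hUP j _).2 ⟨1, by rw [hT1, Matrix.one_mulVec]⟩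
  -- left invariance of the integrals
  have hinv : ∀ (F : (Fin n → ℝ) → ℝ) (h : H) (v : Fin n → ℝ),
      ∫ a, F ((T a).mulVec ((T h).mulVec v)) ∂μ = ∫ a, F ((T a).mulVec v) ∂μ := by
    intro F h v
    have e : ∀ a : H, F ((T a).mulVec ((T h).mulVec v))
        = (fun a => F ((T a).mulVec v)) (h * a) := fun a => by rw [hT]
    simp_rw [e]
    exact integral_mul_left_eq_self (fun a => F ((T a).mulVec v)) h
  -- bump functions
  have hball : ∀ j, ∃ ε : ℝ, 0 < ε ∧ Metric.closedBall (ω j) ε ⊆ U j := by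
    intro j
    obtain ⟨ε, hεp, hb⟩ := Metric.isOpen_iff.1 (hUopen j) _ (hωU j)
    exact ⟨ε / 2, by positivity, (Metric.closedBall_subset_ball (by linarith)).trans hb⟩
  choose ε hε hεU using hball
  set g : Fin k → (Fin n → ℝ) → ℝ := fun j x => max (ε j - dist x (ω j)) 0 with hgdef
  have hgcont : ∀ j, Continuous (g j) := fun j =>
    (continuous_const.sub (continuous_id.dist continuous_const)).max continuous_const
  have hgnn : ∀ j x, 0 ≤ g j x := fun j x => le_max_right _ _
  have hgsupp : ∀ j x, g j x ≠ 0 → x ∈ Metric.closedBall (ω j) (ε j) := by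
    intro j x hx
    by_contra hd
    rw [Metric.mem_closedBall, not_le] at hd
    exact hx (by simp only [hgdef]; exact max_eq_right (by linarith))
  -- properness of orbit maps
  have hcpt : ∀ j, ∀ v ∈ U j,
      IsCompact {a : H | (T a).mulVec v ∈ Metric.closedBall (ω j) (ε j)} := by
    intro j v hv
    haveI : LocallyCompactSpace (U j) := (hUopen j).locallyCompactSpace
    letI act : MulAction H (U j) :=
      { smul := fun h x => ⟨(T h⁻¹).mulVec x.1, by
          obtain ⟨c, hc⟩ := (hUP j x.1).1 x.2
          exact (hUP j _).2 ⟨c * h⁻¹, by rw [hc, hT]⟩⟩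
        one_smul := fun x => Subtype.ext (by
          show (T 1⁻¹).mulVec x.1 = x.1
          rw [inv_one, hT1, Matrix.one_mulVec])
        mul_smul := fun a b x => Subtype.ext (by
          show (T (a * b)⁻¹).mulVec x.1 = (T a⁻¹).mulVec ((T b⁻¹).mulVec x.1)
          rw [hT, _root_.mul_inv_rev]) }
    haveI : ContinuousSMul H (U j) := ⟨by
      apply Continuous.subtype_mk
      exact Continuous.matrix_mulVec (hTcont.comp (continuous_inv.comp continuous_fst))
        (continuous_subtype_val.comp continuous_snd)⟩
    haveI : MulAction.IsPretransitive H (U j) := ⟨by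
      rintro ⟨x, hx⟩ ⟨y, hy⟩
      obtain ⟨a, ha⟩ := (hUP j x).1 hx
      obtain ⟨b, hb⟩ := (hUP j y).1 hy
      refine ⟨(a⁻¹ * b)⁻¹, Subtype.ext ?_⟩
      show (T ((a⁻¹ * b)⁻¹)⁻¹).mulVec x = y
      rw [inv_inv, ha, hT, mul_inv_cancel_left, hb]⟩
    have hstab' : IsCompact {h : H | h • (⟨v, hv⟩ : U j) = ⟨v, hv⟩} := by
      have e : {h : H | h • (⟨v, hv⟩ : U j) = ⟨v, hv⟩}
          = {h : H | ((φ h : Mat n)).transpose.mulVec v = v}⁻¹ := by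
        ext h
        simp only [Set.mem_inv, Set.mem_setOf_eq, Subtype.ext_iff]
        show (T h⁻¹).mulVec v = v ↔ ((φ h⁻¹ : Mat n)).transpose.mulVec v = v
        rw [hTdef]
      rw [e]
      exact (hstab j v hv).inv
    have hKc : IsCompact (Subtype.val ⁻¹' Metric.closedBall (ω j) (ε j) : Set (U j)) :=
      Topology.IsInducing.subtypeVal.isCompact_preimage' (isCompact_closedBall _ _)
        (by rw [Subtype.range_coe]; exact hεU j)
    have hB := aux_proper' (⟨v, hv⟩ : U j) hstab' hKc
    have e2 : {a : H | (T a).mulVec v ∈ Metric.closedBall (ω j) (ε j)}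
        = {g : H | g • (⟨v, hv⟩ : U j) ∈ Subtype.val ⁻¹' Metric.closedBall (ω j) (ε j)}⁻¹ := by
      ext a
      simp only [Set.mem_inv, Set.mem_setOf_eq, Set.mem_preimage]
      show (T a).mulVec v ∈ _ ↔ (T a⁻¹⁻¹).mulVec v ∈ _
      rw [inv_inv]
    rw [e2]
    exact hB.inv
  -- vanishing on other orbits
  have hzero : ∀ i j, ω i ∉ U j → ∀ a : H, g j ((T a).mulVec (ω i)) = 0 := by
    intro i j hij a
    by_contra h0
    apply hij
    obtain ⟨c, hc⟩ := (hUP j _).1 (hεU j (hgsupp j _ h0))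
    refine (hUP j (ω i)).2 ⟨c * a⁻¹, ?_⟩
    have h2 := congrArg (fun w => (T a⁻¹).mulVec w) hc
    rw [hTinv, hT] at h2
    exact h2
  -- integrability
  have hint : ∀ i j, Integrable (fun a => g j ((T a).mulVec (ω i))) μ := by
    intro i j
    by_cases hij : ω i ∈ U j
    · refine Continuous.integrable_of_hasCompactSupport
        ((hgcont j).comp (horbc (ω i))) ?_
      refine HasCompactSupport.intro (hcpt j (ω i) hij) ?_
      intro a ha
      by_contra h0
      exact ha (hgsupp j _ h0)
    · have e : (fun a : H => g j ((T a).mulVec (ω i))) = fun _ => 0 :=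
        funext (hzero i j hij)
      rw [e]
      exact integrable_zero _ _ _
  -- the normalizing constants
  set Gs : (Fin n → ℝ) → ℝ := fun x => ∑ j, g j x with hGsdef
  set d : Fin k → ℝ := fun j => ∫ a, Gs ((T a).mulVec (ω j)) ∂μ with hddef
  have hd_eq : ∀ i, d i = ∑ j, ∫ a, g j ((T a).mulVec (ω i)) ∂μ := by
    intro i
    simp only [hddef, hGsdef]
    exact integral_finset_sum _ fun j _ => hint i j
  have hgpos : ∀ i, 0 < ∫ a, g i ((T a).mulVec (ω i)) ∂μ := by
    intro i
    have hnn : 0 ≤ fun a : H => g i ((T a).mulVec (ω i)) := fun a => hgnn i _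
    rw [integral_pos_iff_support_of_nonneg hnn (hint i i)]
    have hop : IsOpen (Function.support fun a : H => g i ((T a).mulVec (ω i))) := by
      rw [Function.support_eq_preimage]
      exact isOpen_compl_singleton.preimage ((hgcont i).comp (horbc (ω i)))
    refine hop.measure_pos μ ⟨1, ?_⟩
    show g i ((T 1).mulVec (ω i)) ≠ 0
    rw [hT1, Matrix.one_mulVec]
    have e : g i (ω i) = ε i := by simp [hgdef, (hε i).le]
    rw [e]
    exact (hε i).ne'
  have hdpos : ∀ i, 0 < d i := by
    intro i
    calc (0:ℝ) < ∫ a, g i ((T a).mulVec (ω i)) ∂μ := hgpos i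
      _ ≤ d i := by
          rw [hd_eq i]
          exact Finset.single_le_sum (f := fun j => ∫ a, g j ((T a).mulVec (ω i)) ∂μ)
            (fun j _ => integral_nonneg fun a => hgnn j _) (Finset.mem_univ i)
  -- invariance of d
  have hd_orbit : ∀ i j, ω i ∈ U j → d i = d j := by
    intro i j hij
    obtain ⟨c, hc⟩ := (hUP j (ω i)).1 hij
    simp only [hddef]
    rw [hc]
    exact hinv Gs c (ω j)
  -- the wavelet
  set Gd : (Fin n → ℝ) → ℝ := fun x => ∑ j, g j x / d j with hGddef
  have hGdnn : ∀ x, 0 ≤ Gd x := fun x =>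
    Finset.sum_nonneg fun j _ => div_nonneg (hgnn j x) (hdpos j).le
  refine ⟨fun x => (Real.sqrt (Gd x) : ℂ), ?_, ?_, ?_⟩
  · exact Complex.continuous_ofReal.comp (Real.continuous_sqrt.comp
      (continuous_finset_sum _ fun j _ => (hgcont j).div_const _))
  · refine HasCompactSupport.intro (K := ⋃ j ∈ (Finset.univ : Finset (Fin k)),
      Metric.closedBall (ω j) (ε j))
      (Finset.univ.isCompact_biUnion fun j _ => isCompact_closedBall _ _) ?_
    intro x hx
    have hz : ∀ j, g j x = 0 := by
      intro j
      by_contra h0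
      exact hx (Set.mem_biUnion (Finset.mem_univ j) (hgsupp j x h0))
    simp [hGddef, hz]
  · have hae : ∀ᵐ ωp ∂(volume : Measure (Fin n → ℝ)), ωp ∉ M \ ⋃ j, U j :=
      measure_eq_zero_iff_ae_notMem.1 hM1
    filter_upwards [hae] with ωp hωp hωpM
    have hUu : ωp ∈ ⋃ j, U j := by
      by_contra hc
      exact hωp ⟨hωpM, hc⟩
    obtain ⟨i, hi⟩ := Set.mem_iUnion.1 hUu
    obtain ⟨h, hh⟩ := (hUP i ωp).1 hi
    have hpt : ∀ y : Fin n → ℝ, ‖((Real.sqrt (Gd y) : ℝ) : ℂ)‖ ^ 2 = Gd y := by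
      intro y
      rw [Complex.norm_real, Real.norm_eq_abs, abs_of_nonneg (Real.sqrt_nonneg _),
        Real.sq_sqrt (hGdnn y)]
    simp only [hTapp]
    calc ∫ a, ‖((Real.sqrt (Gd ((T a).mulVec ωp)) : ℝ) : ℂ)‖ ^ 2 ∂μ
        = ∫ a, Gd ((T a).mulVec ωp) ∂μ := by simp_rw [hpt]
      _ = ∫ a, Gd ((T a).mulVec (ω i)) ∂μ := by rw [hh]; exact hinv Gd h (ω i)
      _ = ∑ j, (∫ a, g j ((T a).mulVec (ω i)) ∂μ) / d j := by
          simp only [hGddef]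
          rw [integral_finset_sum _ fun j _ => (hint i j).div_const (d j)]
          exact Finset.sum_congr rfl fun j _ => integral_div _ _
      _ = ∑ j, (∫ a, g j ((T a).mulVec (ω i)) ∂μ) / d i := by
          refine Finset.sum_congr rfl fun j _ => ?_
          by_cases hij : ω i ∈ U j
          · rw [hd_orbit i j hij]
          · have e : (fun a : H => g j ((T a).mulVec (ω i))) = fun _ => 0 :=
              funext (hzero i j hij)
            rw [e]
            simp
      _ = (∑ j, ∫ a, g j ((T a).mulVec (ω i)) ∂μ) / d i := by rw [Finset.sum_div]
      _ = d i / d i := by rw [hd_eq i]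
      _ = 1 := div_self (hdpos i).ne'
end
end

section
/- Let H = ANR be a Lie group with R compact, A simply connected abelian, the multiplication map N × A × R → H a diffeomorphism, R and A commuting, R and A normalizing N. Let Γ_N ⊆ N and Γ_A ⊆ A be discrete co-compact subgroups with measurable fundamental domains 𝔽_N ⊆ N, 𝔽_A ⊆ A (so N = ⨆_{γ∈Γ_N} γ𝔽_N and A = ⨆_{γ∈Γ_A} γ𝔽_A, disjointly). Set Γ = Γ_A Γ_N and 𝔽_H = 𝔽_N 𝔽_A R. Then H = ⋃_{γ∈Γ} γ𝔽_H and this union is disjoint. -/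
noncomputable section

/-- Let `H = ANR` with `R` compact, `A` simply connected abelian, the
multiplication `N × A × R → H` a diffeomorphism (here: a bijection, with the topological
hypotheses recorded), `R` and `A` commuting, and `R` and `A` normalizing `N`.  If
`Γ_N ⊆ N`, `Γ_A ⊆ A` are discrete co-compact subgroups with fundamental domains
`𝔽_N ⊆ N`, `𝔽_A ⊆ A`, then with `Γ = Γ_A Γ_N` and `𝔽_H = 𝔽_N 𝔽_A R` we have
`H = ⋃_{γ ∈ Γ} γ𝔽_H` disjointly. -/
theorem stmt17 {G : Type*} [Group G] [TopologicalSpace G] [IsTopologicalGroup G]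
    (A N R : Subgroup G)
    (hRcomp : IsCompact (R : Set G))
    (hAab : ∀ a ∈ A, ∀ a' ∈ A, a * a' = a' * a)
    [SimplyConnectedSpace A]
    (hmul : Function.Bijective fun p : N × A × R => (p.1 : G) * (p.2.1 : G) * (p.2.2 : G))
    (hAR : ∀ a ∈ A, ∀ r ∈ R, a * r = r * a)
    (hAN : ∀ a ∈ A, ∀ m ∈ N, a * m * a⁻¹ ∈ N)
    (hRN : ∀ r ∈ R, ∀ m ∈ N, r * m * r⁻¹ ∈ N)
    (ΓN : Subgroup G) (hΓNle : ΓN ≤ N) [DiscreteTopology ΓN]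
    (ΓA : Subgroup G) (hΓAle : ΓA ≤ A) [DiscreteTopology ΓA]
    (FN : Set G) (hFNsub : FN ⊆ N)
    (hFNcov : ∀ m ∈ N, ∃ γ ∈ ΓN, ∃ f ∈ FN, m = γ * f)
    (hFNdisj : ∀ γ₁ ∈ ΓN, ∀ γ₂ ∈ ΓN, ∀ f₁ ∈ FN, ∀ f₂ ∈ FN,
      γ₁ * f₁ = γ₂ * f₂ → γ₁ = γ₂ ∧ f₁ = f₂)
    (FA : Set G) (hFAsub : FA ⊆ A)
    (hFAcov : ∀ a ∈ A, ∃ γ ∈ ΓA, ∃ f ∈ FA, a = γ * f)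
    (hFAdisj : ∀ γ₁ ∈ ΓA, ∀ γ₂ ∈ ΓA, ∀ f₁ ∈ FA, ∀ f₂ ∈ FA,
      γ₁ * f₁ = γ₂ * f₂ → γ₁ = γ₂ ∧ f₁ = f₂)
    (H Γ FH : Set G)
    (hH : H = {x | ∃ a ∈ A, ∃ m ∈ N, ∃ r ∈ R, x = a * m * r})
    (hΓ : Γ = {x | ∃ γa ∈ ΓA, ∃ γn ∈ ΓN, x = γa * γn})
    (hFH : FH = {x | ∃ fn ∈ FN, ∃ fa ∈ FA, ∃ r ∈ R, x = fn * fa * r}) :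
    (∀ h ∈ H, ∃ γ ∈ Γ, ∃ f ∈ FH, h = γ * f) ∧
      (∀ γ₁ ∈ Γ, ∀ γ₂ ∈ Γ, ∀ f₁ ∈ FH, ∀ f₂ ∈ FH,
        γ₁ * f₁ = γ₂ * f₂ → γ₁ = γ₂ ∧ f₁ = f₂) := by

  constructor
  · intro h hh
    rw [hH] at hh
    obtain ⟨a, ha, m, hm, r, hr, rfl⟩ := hh
    obtain ⟨γa, hγa, fa, hfa, rfl⟩ := hFAcov a ha
    have hfaA := hFAsub hfa
    obtain ⟨γn, hγn, fn, hfn, hdec⟩ := hFNcov _ (hAN fa hfaA m hm)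
    refine ⟨γa * γn, ?_, fn * fa * r, ?_, ?_⟩
    · rw [hΓ]; exact ⟨γa, hγa, γn, hγn, rfl⟩
    · rw [hFH]; exact ⟨fn, hfn, fa, hfa, r, hr, rfl⟩
    · have h2 : fa * m = γn * fn * fa := by
        have := congrArg (· * fa) hdec
        simpa [mul_assoc] using this
      calc γa * fa * m * r = γa * (fa * m) * r := by group
        _ = γa * (γn * fn * fa) * r := by rw [h2]
        _ = γa * γn * (fn * fa * r) := by group
  · intro γ₁ hγ₁ γ₂ hγ₂ f₁ hf₁ f₂ hf₂ heq
    rw [hΓ] at hγ₁ hγ₂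
    rw [hFH] at hf₁ hf₂
    obtain ⟨γa₁, hγa₁, γn₁, hγn₁, rfl⟩ := hγ₁
    obtain ⟨γa₂, hγa₂, γn₂, hγn₂, rfl⟩ := hγ₂
    obtain ⟨fn₁, hfn₁, fa₁, hfa₁, r₁, hr₁, rfl⟩ := hf₁
    obtain ⟨fn₂, hfn₂, fa₂, hfa₂, r₂, hr₂, rfl⟩ := hf₂
    have hn₁ : γa₁ * (γn₁ * fn₁) * γa₁⁻¹ ∈ N :=
      hAN _ (hΓAle hγa₁) _ (mul_mem (hΓNle hγn₁) (hFNsub hfn₁))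
    have hn₂ : γa₂ * (γn₂ * fn₂) * γa₂⁻¹ ∈ N :=
      hAN _ (hΓAle hγa₂) _ (mul_mem (hΓNle hγn₂) (hFNsub hfn₂))
    have ha₁ : γa₁ * fa₁ ∈ A := mul_mem (hΓAle hγa₁) (hFAsub hfa₁)
    have ha₂ : γa₂ * fa₂ ∈ A := mul_mem (hΓAle hγa₂) (hFAsub hfa₂)
    have himg : (γa₁ * (γn₁ * fn₁) * γa₁⁻¹) * (γa₁ * fa₁) * r₁
        = (γa₂ * (γn₂ * fn₂) * γa₂⁻¹) * (γa₂ * fa₂) * r₂ := by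
      have e1 : ∀ x y z w v : G, (x * (y * z) * x⁻¹) * (x * w) * v = x * y * (z * w * v) := by
        intros; group
      rw [e1, e1]; exact heq
    have key : (⟨⟨_, hn₁⟩, ⟨_, ha₁⟩, ⟨_, hr₁⟩⟩ : N × A × R)
        = ⟨⟨_, hn₂⟩, ⟨_, ha₂⟩, ⟨_, hr₂⟩⟩ := hmul.injective (by simpa using himg)
    have eN : γa₁ * (γn₁ * fn₁) * γa₁⁻¹ = γa₂ * (γn₂ * fn₂) * γa₂⁻¹ :=
      congrArg (fun p : N × A × R => (p.1 : G)) key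
    have eA : γa₁ * fa₁ = γa₂ * fa₂ :=
      congrArg (fun p : N × A × R => (p.2.1 : G)) key
    have eR : r₁ = r₂ :=
      congrArg (fun p : N × A × R => (p.2.2 : G)) key
    obtain ⟨hγaeq, hfaeq⟩ := hFAdisj _ hγa₁ _ hγa₂ _ hfa₁ _ hfa₂ eA
    subst hγaeq hfaeq
    have eNN : γn₁ * fn₁ = γn₂ * fn₂ := by
      have := mul_right_cancel eN
      exact mul_left_cancel this
    obtain ⟨hγneq, hfneq⟩ := hFNdisj _ hγn₁ _ hγn₂ _ hfn₁ _ hfn₂ eNN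
    subst hγneq hfneq eR
    exact ⟨rfl, rfl⟩
end
end

section
/- Let D be a discrete subgroup of GL(n,ℝ) acting on ℝⁿ by d·x = (d⁻¹)ᵀx. Suppose for almost every x ∈ ℝⁿ there exists ε > 0 such that the ε-stabilizer D^x_ε = {d ∈ D : ‖d·x − x‖ ≤ ε} is finite. Then there exists a measurable set K ⊆ ℝⁿ such that Σ_{d∈D} χ_K(dᵀx) = 1 for almost every x; equivalently, {dᵀK : d ∈ D} is a measurable tiling of ℝⁿ. -/
open MeasureTheory Matrix Set
open scoped MatrixGroups ComplexConjugate Real ENNReal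

noncomputable section

namespace Stmt18Aux

variable {n : ℕ} {D : Subgroup (GL (Fin n) ℝ)}

def act (d : D) (x : Fin n → ℝ) : Fin n → ℝ :=
  ((d : GL (Fin n) ℝ) : Mat n).transpose.mulVec x

lemma act_one (x : Fin n → ℝ) : act (1 : D) x = x := by
  simp [act]

lemma act_mul (d e : D) (x : Fin n → ℝ) : act (d * e) x = act e (act d x) := by
  simp [act, Matrix.transpose_mul, Matrix.mulVec_mulVec]

lemma act_inv_act (d : D) (x : Fin n → ℝ) : act d⁻¹ (act d x) = x := by
  rw [← act_mul, mul_inv_cancel, act_one]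

lemma act_act_inv (d : D) (x : Fin n → ℝ) : act d (act d⁻¹ x) = x := by
  rw [← act_mul, inv_mul_cancel, act_one]

lemma act_measurable (d : D) : Measurable (act d) := by
  have h : act d = fun x => (((d : GL (Fin n) ℝ) : Mat n).transpose.mulVecLin) x := by
    funext x; simp only [act, Matrix.mulVecLin_apply]
  rw [h]
  exact (LinearMap.continuous_of_finiteDimensional _).measurable

lemma countableD [DiscreteTopology D] : Countable D := by
  have h1 : SecondCountableTopology (Mat n) := by
    constructor
    exact (inferInstance : SecondCountableTopology
      (Fin n → Fin n → ℝ)).is_open_generated_countable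
  have h2 : SecondCountableTopology ((Mat n)ᵐᵒᵖ) :=
    MulOpposite.opHomeomorph.symm.isInducing.secondCountableTopology
  have h3 : SecondCountableTopology (GL (Fin n) ℝ) :=
    Units.isInducing_embedProduct.secondCountableTopology
  exact (TopologicalSpace.separableSpace_iff_countable).mp inferInstance

lemma fixed_null (d : D) (hd : d ≠ 1) :
    volume {x : Fin n → ℝ | act d x = x} = 0 := by
  set M : Mat n := ((d : GL (Fin n) ℝ) : Mat n).transpose with hM
  set L : (Fin n → ℝ) →ₗ[ℝ] (Fin n → ℝ) := M.mulVecLin - LinearMap.id with hL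
  have hker : {x : Fin n → ℝ | act d x = x} = ↑(LinearMap.ker L) := by
    ext x
    simp only [mem_setOf_eq, SetLike.mem_coe, LinearMap.mem_ker, hL, LinearMap.sub_apply,
      LinearMap.id_apply, Matrix.mulVecLin_apply, sub_eq_zero]
    rfl
  rw [hker]
  apply Measure.addHaar_submodule
  intro htop
  apply hd
  have h1 : ∀ x : Fin n → ℝ, M.mulVec x = x := by
    intro x
    have hx : L x = 0 := by
      rw [← LinearMap.mem_ker, htop]; trivial
    simpa [hL, sub_eq_zero, Matrix.mulVecLin_apply] using hx
  have hMone : M = 1 := by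
    have h2 : Matrix.toLin' M = Matrix.toLin' (1 : Mat n) := by
      apply LinearMap.ext
      intro x
      simp [Matrix.toLin'_apply, h1 x]
    exact Matrix.toLin'.injective h2
  have hcoe : ((d : GL (Fin n) ℝ) : Mat n) = 1 := by
    rw [hM] at hMone
    simpa using congrArg Matrix.transpose hMone
  exact Subtype.ext (Units.ext (by simpa using hcoe))

lemma rational_ball (x : Fin n → ℝ) {ε : ℝ} (hε : 0 < ε) :
    ∃ (q : Fin n → ℚ) (r : ℚ), x ∈ Metric.closedBall (fun i => (q i : ℝ)) (r : ℝ) ∧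
      Metric.closedBall (fun i => (q i : ℝ)) (r : ℝ) ⊆ Metric.closedBall x ε := by
  have h4 : (0:ℝ) < ε / 4 := by linarith
  have hq : ∀ i, ∃ qi : ℚ, |x i - (qi : ℝ)| < ε / 4 := fun i => exists_rat_near (x i) h4
  choose q hq using hq
  obtain ⟨r, hr1, hr2⟩ := exists_rat_btwn (show ε / 4 < ε / 2 by linarith)
  have hxc : dist x (fun i => (q i : ℝ)) ≤ ε / 4 := by
    rw [dist_pi_le_iff (le_of_lt h4)]
    intro i
    rw [Real.dist_eq]
    exact (hq i).le
  refine ⟨q, r, ?_, ?_⟩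
  · rw [Metric.mem_closedBall]
    linarith
  · intro y hy
    rw [Metric.mem_closedBall] at hy ⊢
    have htri : dist y x ≤ dist y (fun i => (q i : ℝ)) + dist (fun i => (q i : ℝ)) x :=
      dist_triangle _ _ _
    have hcx : dist (fun i => (q i : ℝ)) x ≤ ε / 4 := by rwa [dist_comm]
    linarith

end Stmt18Aux

open Stmt18Aux

/-- If `D` is a discrete subgroup of `GL(n,ℝ)` acting by `d·x = (d⁻¹)ᵀx` and
for a.e. `x` some `ε`-stabilizer `D^x_ε` is finite, then there is a measurable `K` with
`Σ_{d ∈ D} χ_K(dᵀx) = 1` a.e., i.e. `{dᵀK : d ∈ D}` is a measurable tiling of `ℝⁿ`. -/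
theorem stmt18 {n : ℕ} (D : Subgroup (GL (Fin n) ℝ)) [DiscreteTopology D]
    (hstab : ∀ᵐ x ∂(volume : Measure (Fin n → ℝ)), ∃ ε > (0 : ℝ),
      {d : D | ‖(↑((d : GL (Fin n) ℝ))⁻¹ : Mat n).transpose.mulVec x - x‖ ≤ ε}.Finite) :
    ∃ K : Set (Fin n → ℝ), MeasurableSet K ∧
      (∀ᵐ x ∂(volume : Measure (Fin n → ℝ)),
        ∑' d : D, K.indicator (fun _ => (1 : ℝ≥0∞))
          ((↑(d : GL (Fin n) ℝ) : Mat n).transpose.mulVec x) = 1) ∧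
      Tiles fun d : D => (↑(d : GL (Fin n) ℝ) : Mat n).transpose.mulVec '' K := by
  classical
  haveI : Countable D := countableD
  -- enumeration of rational closed balls
  obtain ⟨enum, henum⟩ := exists_surjective_nat ((Fin n → ℚ) × ℚ)
  set B : ℕ → Set (Fin n → ℝ) :=
    fun j => Metric.closedBall (fun i => ((enum j).1 i : ℝ)) ((enum j).2 : ℝ) with hBdef
  have hBmeas : ∀ j, MeasurableSet (B j) := fun j => Metric.isClosed_closedBall.measurableSet
  have hball : ∀ (x : Fin n → ℝ) (ε : ℝ), 0 < ε →
      ∃ j, x ∈ B j ∧ B j ⊆ Metric.closedBall x ε := by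
    intro x ε hε
    obtain ⟨q, r, h1, h2⟩ := rational_ball x hε
    obtain ⟨j, hj⟩ := henum (q, r)
    refine ⟨j, ?_, ?_⟩ <;> simp only [hBdef, hj] <;> assumption
  -- the counting functions
  set f : ℕ → (Fin n → ℝ) → ℝ≥0∞ :=
    fun j x => ∑' d : D, (B j).indicator (fun _ => (1 : ℝ≥0∞)) (act d x) with hfdef
  have hfmeas : ∀ j, Measurable (f j) := by
    intro j
    exact Measurable.ennreal_tsum fun d =>
      (measurable_const.indicator (hBmeas j)).comp (act_measurable d)
  have hfinv : ∀ (j : ℕ) (d : D) (x : Fin n → ℝ), f j (act d x) = f j x := by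
    intro j d x
    have h1 : ∀ e : D, (B j).indicator (fun _ => (1 : ℝ≥0∞)) (act e (act d x))
        = (B j).indicator (fun _ => (1 : ℝ≥0∞)) (act ((Equiv.mulLeft d) e) x) := by
      intro e; rw [Equiv.coe_mulLeft, act_mul]
    calc f j (act d x)
        = ∑' e : D, (B j).indicator (fun _ => (1 : ℝ≥0∞)) (act ((Equiv.mulLeft d) e) x) :=
          tsum_congr h1
      _ = f j x := (Equiv.mulLeft d).tsum_eq
          (fun e => (B j).indicator (fun _ => (1 : ℝ≥0∞)) (act e x))
  have hf_single : ∀ (j : ℕ) (x : Fin n → ℝ),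
      {d : D | act d x ∈ B j} = {1} → f j x = 1 := by
    intro j x h
    have h1 : x ∈ B j := by
      have : (1 : D) ∈ {d : D | act d x ∈ B j} := h ▸ rfl
      simpa [act_one] using this
    have h2 : ∀ d : D, d ≠ 1 → (B j).indicator (fun _ => (1 : ℝ≥0∞)) (act d x) = 0 := by
      intro d hd
      apply Set.indicator_of_notMem
      intro hmem
      have hmem' : d ∈ {d : D | act d x ∈ B j} := hmem
      rw [h] at hmem'
      exact hd (by simpa using hmem')
    have hfx : f j x = ∑' d : D, (B j).indicator (fun _ => (1 : ℝ≥0∞)) (act d x) := rfl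
    rw [hfx, tsum_eq_single 1 h2, act_one, Set.indicator_of_mem h1]
  -- the sets Ω and K
  set Ω : ℕ → Set (Fin n → ℝ) :=
    fun j => {x | f j x = 1 ∧ ∀ i < j, f i x ≠ 1} with hΩdef
  have hΩmeas : ∀ j, MeasurableSet (Ω j) := by
    intro j
    have h1 : MeasurableSet {x : Fin n → ℝ | f j x = 1} :=
      hfmeas j (measurableSet_singleton 1)
    have h2 : MeasurableSet {x : Fin n → ℝ | ∀ i < j, f i x ≠ 1} := by
      have : {x : Fin n → ℝ | ∀ i < j, f i x ≠ 1}
          = ⋂ i, ⋂ (_ : i < j), {x : Fin n → ℝ | f i x = 1}ᶜ := by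
        ext x; simp
      rw [this]
      exact MeasurableSet.iInter fun i => MeasurableSet.iInter fun _ =>
        (hfmeas i (measurableSet_singleton 1)).compl
    have : Ω j = {x : Fin n → ℝ | f j x = 1} ∩ {x : Fin n → ℝ | ∀ i < j, f i x ≠ 1} := by
      ext x; simp [hΩdef, mem_setOf_eq]
    rw [this]; exact h1.inter h2
  have hΩinv : ∀ (j : ℕ) (d : D) (x : Fin n → ℝ), act d x ∈ Ω j ↔ x ∈ Ω j := by
    intro j d x
    simp only [hΩdef, mem_setOf_eq, hfinv]
  have hΩuniq : ∀ (x : Fin n → ℝ) (i j : ℕ), x ∈ Ω i → x ∈ Ω j → i = j := by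
    intro x i j hi hj
    by_contra hne
    rcases Nat.lt_or_ge i j with h | h
    · exact hj.2 i h hi.1
    · exact hi.2 j (lt_of_le_of_ne h (Ne.symm hne)) hj.1
  set K : Set (Fin n → ℝ) := ⋃ j, Ω j ∩ B j with hKdef
  have hKmeas : MeasurableSet K :=
    MeasurableSet.iUnion fun j => (hΩmeas j).inter (hBmeas j)
  -- the main pointwise computation
  have hmain : ∀ x : Fin n → ℝ, (∃ j, f j x = 1) →
      ∑' d : D, K.indicator (fun _ => (1 : ℝ≥0∞)) (act d x) = 1 := by
    intro x hx
    set j₀ := Nat.find hx with hj₀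
    have hx0 : x ∈ Ω j₀ := ⟨Nat.find_spec hx, fun i hi => Nat.find_min hx hi⟩
    have hKd : ∀ d : D, (act d x ∈ K ↔ act d x ∈ B j₀) := by
      intro d
      constructor
      · intro hk
        obtain ⟨i, hΩi, hBi⟩ := mem_iUnion.mp hk
        have hxi : x ∈ Ω i := (hΩinv i d x).mp hΩi
        have hij : i = j₀ := hΩuniq x i j₀ hxi hx0
        rwa [hij] at hBi
      · intro hb
        exact mem_iUnion.mpr ⟨j₀, ⟨(hΩinv j₀ d x).mpr hx0, hb⟩⟩
    have hind : ∀ d : D, K.indicator (fun _ => (1 : ℝ≥0∞)) (act d x)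
        = (B j₀).indicator (fun _ => (1 : ℝ≥0∞)) (act d x) := by
      intro d
      by_cases h : act d x ∈ B j₀
      · rw [Set.indicator_of_mem ((hKd d).mpr h), Set.indicator_of_mem h]
      · rw [Set.indicator_of_notMem (fun hk => h ((hKd d).mp hk)),
          Set.indicator_of_notMem h]
    rw [tsum_congr hind]
    exact Nat.find_spec hx
  -- a.e. every point has some f j x = 1
  have hN : volume {x : Fin n → ℝ | ∃ d : D, d ≠ 1 ∧ act d x = x} = 0 := by
    have heq : {x : Fin n → ℝ | ∃ d : D, d ≠ 1 ∧ act d x = x}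
        = ⋃ d : D, ⋃ (_ : d ≠ 1), {x : Fin n → ℝ | act d x = x} := by
      ext x; simp [mem_setOf_eq]
    rw [heq]
    exact measure_iUnion_null fun d => measure_iUnion_null fun hd => fixed_null d hd
  have hae : ∀ᵐ x ∂(volume : Measure (Fin n → ℝ)), ∃ j, f j x = 1 := by
    have hNae : ∀ᵐ x ∂(volume : Measure (Fin n → ℝ)),
        ¬ (∃ d : D, d ≠ 1 ∧ act d x = x) := by
      rw [ae_iff]
      simpa using hN
    filter_upwards [hstab, hNae] with x hx1 hx2
    push_neg at hx2
    obtain ⟨ε, hε, hfin⟩ := hx1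
    -- the set of d with ‖act d x - x‖ ≤ ε is finite
    have hT : {d : D | ‖act d x - x‖ ≤ ε}.Finite := by
      have heq : {d : D | ‖act d x - x‖ ≤ ε}
          = (fun d : D => d⁻¹) ⁻¹'
            {d : D | ‖(↑((d : GL (Fin n) ℝ))⁻¹ : Mat n).transpose.mulVec x - x‖ ≤ ε} := by
        ext d
        simp only [mem_preimage, mem_setOf_eq]
        have : (↑(((d⁻¹ : D) : GL (Fin n) ℝ))⁻¹ : Mat n) = ((d : GL (Fin n) ℝ) : Mat n) := by
          simp
        rw [this]
        rfl
      rw [heq]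
      exact hfin.preimage ((inv_injective).injOn)
    -- find ε' > 0 so that only the identity moves x by at most ε'
    have hsep : ∃ ε' > (0:ℝ), ∀ d : D, ‖act d x - x‖ ≤ ε' → d = 1 := by
      set F : Finset D := hT.toFinset.erase 1 with hF
      by_cases hFne : F.Nonempty
      · set δ := F.inf' hFne (fun d => ‖act d x - x‖) with hδ
        have hδpos : 0 < δ := by
          rw [hδ, Finset.lt_inf'_iff]
          intro d hd
          have hd1 : d ≠ 1 := (Finset.mem_erase.mp hd).1
          have : act d x ≠ x := hx2 d hd1
          have : act d x - x ≠ 0 := sub_ne_zero_of_ne this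
          exact norm_pos_iff.mpr this
        refine ⟨min (ε/2) (δ/2), by positivity, ?_⟩
        intro d hd
        by_contra hd1
        have hdT : d ∈ hT.toFinset := by
          rw [Set.Finite.mem_toFinset]
          exact le_trans hd (le_trans (min_le_left _ _) (by linarith))
        have hdF : d ∈ F := Finset.mem_erase.mpr ⟨hd1, hdT⟩
        have : δ ≤ ‖act d x - x‖ := Finset.inf'_le _ hdF
        have : δ ≤ min (ε/2) (δ/2) := le_trans this hd
        have : δ ≤ δ/2 := le_trans this (min_le_right _ _)
        linarith
      · refine ⟨ε, hε, ?_⟩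
        intro d hd
        by_contra hd1
        exact hFne ⟨d, Finset.mem_erase.mpr ⟨hd1, Set.Finite.mem_toFinset hT |>.mpr hd⟩⟩
    obtain ⟨ε', hε', hsep'⟩ := hsep
    obtain ⟨j, hxj, hjsub⟩ := hball x ε' hε'
    refine ⟨j, hf_single j x ?_⟩
    ext d
    simp only [mem_setOf_eq, mem_singleton_iff]
    constructor
    · intro hd
      apply hsep'
      have := hjsub hd
      rw [Metric.mem_closedBall, dist_eq_norm] at this
      exact this
    · rintro rfl
      rwa [act_one]
  -- conclude
  refine ⟨K, hKmeas, hae.mono hmain, ?_⟩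
  -- the tiling
  have hSim : ∀ d : D,
      ((↑(d : GL (Fin n) ℝ) : Mat n).transpose.mulVec '' K) = (act d⁻¹) ⁻¹' K := by
    intro d
    ext y
    constructor
    · rintro ⟨k, hk, rfl⟩
      show act d⁻¹ (act d k) ∈ K
      rwa [act_inv_act]
    · intro hy
      exact ⟨act d⁻¹ y, hy, act_act_inv d y⟩
  have hbad : volume {x : Fin n → ℝ |
      ¬ (∑' d : D, K.indicator (fun _ => (1 : ℝ≥0∞)) (act d x) = 1)} = 0 := by
    have := hae.mono hmain
    rw [ae_iff] at this
    exact this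
  refine ⟨?_, ?_, ?_, ?_⟩
  · intro d
    have hms := (act_measurable (D := D) d⁻¹) hKmeas
    rw [← hSim d] at hms
    exact hms
  · intro d e hde
    apply measure_mono_null _ hbad
    intro x hx
    simp only [mem_inter_iff, hSim] at hx
    simp only [mem_setOf_eq]
    intro hsum
    have h1 : K.indicator (fun _ => (1 : ℝ≥0∞)) (act d⁻¹ x) = 1 :=
      Set.indicator_of_mem (show act d⁻¹ x ∈ K from hx.1) _
    have h2 : K.indicator (fun _ => (1 : ℝ≥0∞)) (act e⁻¹ x) = 1 :=
      Set.indicator_of_mem (show act e⁻¹ x ∈ K from hx.2) _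
    have hne : (d⁻¹ : D) ≠ e⁻¹ := fun h => hde (inv_injective h)
    have h3 : (2 : ℝ≥0∞) ≤ ∑' d' : D, K.indicator (fun _ => (1 : ℝ≥0∞)) (act d' x) := by
      calc (2 : ℝ≥0∞) = ∑ d' ∈ ({d⁻¹, e⁻¹} : Finset D),
            K.indicator (fun _ => (1 : ℝ≥0∞)) (act d' x) := by
            rw [Finset.sum_pair hne, h1, h2]; norm_num
        _ ≤ _ := ENNReal.sum_le_tsum _
    rw [hsum] at h3
    exact absurd h3 (by norm_num)
  · apply measure_mono_null _ hbad
    intro x hx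
    simp only [mem_diff, mem_univ, true_and, mem_iUnion] at hx
    simp only [mem_setOf_eq]
    intro hsum
    apply hx
    have hex : ∃ d : D, K.indicator (fun _ => (1 : ℝ≥0∞)) (act d x) ≠ 0 := by
      by_contra hall
      push_neg at hall
      rw [ENNReal.tsum_eq_zero.mpr hall] at hsum
      exact one_ne_zero hsum.symm
    obtain ⟨d, hd⟩ := hex
    have hdK : act d x ∈ K := by
      by_contra hmem
      exact hd (Set.indicator_of_notMem hmem _)
    refine ⟨d⁻¹, ?_⟩
    show x ∈ (↑((d⁻¹ : D) : GL (Fin n) ℝ) : Mat n).transpose.mulVec '' K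
    rw [hSim d⁻¹]
    show act d⁻¹⁻¹ x ∈ K
    rwa [inv_inv]
  · have : ((⋃ d : D, (↑(d : GL (Fin n) ℝ) : Mat n).transpose.mulVec '' K) \ univ) = ∅ := by
      simp
    rw [this]
    exact measure_empty
end
end
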